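/- arXiv:2603.25390 — 4 statements merged into one kernel-verified Lean document; each statement's English description precedes it below -/
import Mathlib

section
/- Let M ∈ ℝ^{n×n} be symmetric positive definite, H ∈ ℝ^{n×n} symmetric, and let u₁, …, u_k ∈ ℝⁿ be M-orthonormal. Suppose that for every i = 1, …, k the deflated projection condition P_i^M M⁻¹ H uᵢ = 0 holds. Then each uᵢ is a generalized eigenvector: H uᵢ = λᵢ M uᵢ with λᵢ = uᵢᵀ H uᵢ, for every i = 1, …, k. -/
open Matrix

lemma vecMulVec_mulVec' {n : ℕ} (a b v : Fin n → ℝ) :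
    vecMulVec a b *ᵥ v = (b ⬝ᵥ v) • a := by
  ext i
  simp [vecMulVec_apply, mulVec, dotProduct, Finset.mul_sum, mul_comm, mul_assoc,
    mul_left_comm]


lemma sum_mulVec' {n k : ℕ} (s : Finset (Fin k)) (A : Fin k → Matrix (Fin n) (Fin n) ℝ)
    (v : Fin n → ℝ) : (∑ j ∈ s, A j) *ᵥ v = ∑ j ∈ s, A j *ᵥ v := by
  ext i
  simp [mulVec, dotProduct, Matrix.sum_apply, Finset.sum_mul]
  rw [Finset.sum_comm]

lemma mulVec_sum' {n k : ℕ} (s : Finset (Fin k)) (A : Matrix (Fin n) (Fin n) ℝ)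
    (v : Fin k → (Fin n → ℝ)) : A *ᵥ (∑ j ∈ s, v j) = ∑ j ∈ s, A *ᵥ v j := by
  rw [← A.mulVecLin_apply, map_sum]
  simp [mulVecLin_apply]

lemma dotProduct_sum' {n k : ℕ} (s : Finset (Fin k)) (a : Fin n → ℝ)
    (v : Fin k → (Fin n → ℝ)) : a ⬝ᵥ (∑ j ∈ s, v j) = ∑ j ∈ s, a ⬝ᵥ v j := by
  simp [dotProduct, Finset.sum_apply, Finset.mul_sum]
  rw [Finset.sum_comm]

/-- Let `M` be SPD, `H` symmetric, and `u₁, …, u_k` `M`-orthonormal.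
If `P_i^M M⁻¹ H uᵢ = 0` for every `i`, where
`P_i^M = I − uᵢuᵢᵀM − 2∑_{j<i} uⱼuⱼᵀM`, then each `uᵢ` is a generalized
eigenvector: `H uᵢ = λᵢ M uᵢ` with `λᵢ = uᵢᵀ H uᵢ`. -/
theorem deflated_projection_implies_eigenvector
    (n k : ℕ) (M H : Matrix (Fin n) (Fin n) ℝ)
    (hM : M.PosDef) (hH : H.IsSymm)
    (u : Fin k → (Fin n → ℝ))
    (hortho : ∀ i j, u i ⬝ᵥ (M *ᵥ u j) = if i = j then (1 : ℝ) else 0)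
    (hproj : ∀ i, (1 - vecMulVec (u i) (u i) * M
            - (2 : ℝ) • ∑ j ∈ Finset.Iio i, vecMulVec (u j) (u j) * M) *ᵥ
          (M⁻¹ *ᵥ (H *ᵥ u i)) = 0) :
    ∀ i, H *ᵥ u i = (u i ⬝ᵥ (H *ᵥ u i)) • (M *ᵥ u i) := by
  have hdet : IsUnit M.det := isUnit_iff_ne_zero.mpr hM.det_pos.ne'
  intro i
  set c : Fin k → ℝ := fun j => u j ⬝ᵥ (H *ᵥ u i) with hc
  set w : Fin n → ℝ := M⁻¹ *ᵥ (H *ᵥ u i) with hw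
  have hMw : M *ᵥ w = H *ᵥ u i := by
    rw [hw, mulVec_mulVec, Matrix.mul_nonsing_inv _ hdet, one_mulVec]
  -- expand projection equation
  have hexp : w - c i • u i - (2:ℝ) • ∑ j ∈ Finset.Iio i, c j • u j = 0 := by
    have h := hproj i
    rw [sub_mulVec, sub_mulVec, one_mulVec, smul_mulVec] at h
    rw [← hw] at h
    have hs : (∑ j ∈ Finset.Iio i, vecMulVec (u j) (u j) * M) *ᵥ w
        = ∑ j ∈ Finset.Iio i, c j • u j := by
      rw [sum_mulVec' _]
      refine Finset.sum_congr rfl fun j _ => ?_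
      rw [← mulVec_mulVec, hMw, vecMulVec_mulVec']
    have hA : (vecMulVec (u i) (u i) * M) *ᵥ w = c i • u i := by
      rw [← mulVec_mulVec, hMw, vecMulVec_mulVec']
    rw [hs, hA] at h
    exact h
  have hweq : w = c i • u i + (2:ℝ) • ∑ j ∈ Finset.Iio i, c j • u j := by
    rw [sub_sub] at hexp
    exact sub_eq_zero.mp hexp
  -- apply M
  have hHu : H *ᵥ u i
      = c i • (M *ᵥ u i) + (2:ℝ) • ∑ j ∈ Finset.Iio i, c j • (M *ᵥ u j) := by
    rw [← hMw, hweq, mulVec_add, mulVec_smul, mulVec_smul, mulVec_sum']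
    simp [mulVec_smul]
  -- coefficients c j vanish for j < i
  have hcz : ∀ l ∈ Finset.Iio i, c l = 0 := by
    intro l hl
    have hli : l ≠ i := Finset.mem_Iio.mp hl |>.ne
    have := congrArg (fun v => u l ⬝ᵥ v) hHu
    simp only [dotProduct_add, dotProduct_smul] at this
    rw [hortho l i, if_neg hli] at this
    have hsum : u l ⬝ᵥ (∑ j ∈ Finset.Iio i, c j • (M *ᵥ u j)) = c l := by
      rw [dotProduct_sum']
      rw [Finset.sum_eq_single l]
      · rw [dotProduct_smul, hortho l l, if_pos rfl]; simp
      · intro j hj hjl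
        rw [dotProduct_smul, hortho l j, if_neg (Ne.symm hjl)]; simp
      · intro h; exact absurd hl h
    rw [hsum] at this
    have : c l = 2 * c l := by
      simpa [hc, smul_eq_mul] using this
    linarith
  rw [hHu, Finset.sum_congr rfl (fun j hj => by rw [hcz j hj, zero_smul])]
  simp [hc, hortho i i]
end

section
/- Let M ∈ ℝ^{n×n} be symmetric positive definite, H ∈ ℝ^{n×n} symmetric, and let u₁, …, uₙ be an M-orthonormal basis with H uⱼ = λⱼ M uⱼ for all j. Fix i ∈ {1, …, k} and τ > 0, and set J_i = τ(λᵢ I + 2∑_{j=1}^{i} λⱼ uⱼuⱼᵀM − M⁻¹H). Then J_i u_ℓ = τ(λᵢ + λ_ℓ) u_ℓ for ℓ ≤ i and J_i u_ℓ = τ(λᵢ − λ_ℓ) u_ℓ for ℓ > i. -/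
open Matrix

lemma vecMulVec_mulVec_aux (n : ℕ) (w v x : Fin n → ℝ) :
    vecMulVec w v *ᵥ x = (v ⬝ᵥ x) • w := by
  ext r
  simp [vecMulVec, mulVec, dotProduct, Finset.mul_sum, mul_assoc, mul_comm, mul_left_comm]

/-- Let `M` be SPD, `H` symmetric, `u₁, …, uₙ` an `M`-orthonormal
basis with `H uⱼ = λⱼ M uⱼ`. Fix `i ∈ {1, …, k}` and `τ > 0`, and set
`J_i = τ(λᵢ I + 2∑_{j≤i} λⱼ uⱼuⱼᵀM − M⁻¹H)`. Then `J_i u_ℓ = τ(λᵢ + λ_ℓ) u_ℓ`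
for `ℓ ≤ i` and `J_i u_ℓ = τ(λᵢ − λ_ℓ) u_ℓ` for `ℓ > i`. -/
theorem frame_block_eigenvalues
    (n k : ℕ) (hk : k ≤ n) (M H : Matrix (Fin n) (Fin n) ℝ)
    (hM : M.PosDef) (hH : H.IsSymm)
    (u : Fin n → (Fin n → ℝ)) (lam : Fin n → ℝ)
    (hortho : ∀ i j, u i ⬝ᵥ (M *ᵥ u j) = if i = j then (1 : ℝ) else 0)
    (heig : ∀ j, H *ᵥ u j = lam j • (M *ᵥ u j))
    (i : Fin n) (hi : (i : ℕ) < k) (τ : ℝ) (hτ : 0 < τ) :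
    ∀ ℓ : Fin n,
      (τ • (lam i • (1 : Matrix (Fin n) (Fin n) ℝ)
          + (2 : ℝ) • ∑ j ∈ Finset.Iic i, lam j • (vecMulVec (u j) (u j) * M)
          - M⁻¹ * H)) *ᵥ u ℓ
        = (if ℓ ≤ i then τ * (lam i + lam ℓ) else τ * (lam i - lam ℓ)) • u ℓ := by
  intro ℓ
  have hMdet : IsUnit M.det := isUnit_iff_ne_zero.mpr (ne_of_gt hM.det_pos)
  have hinv : (M⁻¹ * H) *ᵥ u ℓ = lam ℓ • u ℓ := by
    rw [← mulVec_mulVec, heig, mulVec_smul, mulVec_mulVec, Matrix.nonsing_inv_mul M hMdet,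
      one_mulVec]
  have hsum : (∑ j ∈ Finset.Iic i, lam j • (vecMulVec (u j) (u j) * M)) *ᵥ u ℓ
      = (if ℓ ≤ i then lam ℓ • u ℓ else 0) := by
    have hsplit : (∑ j ∈ Finset.Iic i, lam j • (vecMulVec (u j) (u j) * M)) *ᵥ u ℓ
        = ∑ j ∈ Finset.Iic i, (lam j • (vecMulVec (u j) (u j) * M)) *ᵥ u ℓ :=
      map_sum (mulVec.addMonoidHomLeft (u ℓ)) _ _
    rw [hsplit]
    have : ∀ j ∈ Finset.Iic i, (lam j • (vecMulVec (u j) (u j) * M)) *ᵥ u ℓ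
        = (if j = ℓ then lam j • u j else 0) := by
      intro j _
      rw [smul_mulVec, ← mulVec_mulVec, vecMulVec_mulVec_aux, hortho]
      by_cases h : j = ℓ <;> simp [h]
    rw [Finset.sum_congr rfl this, Finset.sum_ite_eq' (Finset.Iic i) ℓ (fun j => lam j • u j)]
    simp [Finset.mem_Iic]
  rw [smul_mulVec, sub_mulVec, add_mulVec, smul_mulVec, one_mulVec,
    smul_mulVec, hsum, hinv]
  by_cases h : ℓ ≤ i <;> simp [h, smul_smul, smul_sub, smul_add] <;> module
end

section
/- Let M ∈ ℝ^{n×n} be symmetric positive definite, H ∈ ℝ^{n×n} symmetric, and let u₁, …, uₙ be an M-orthonormal basis with H uⱼ = λⱼ M uⱼ, where μ ≤ |λⱼ| ≤ L for all j for constants 0 < μ ≤ L, exactly the first k eigenvalues λ₁, …, λ_k being negative. Let V = [u₁, …, u_k], R = I − 2∑_{j=1}^k uⱼuⱼᵀM, η = 2/(L+μ), and κ = L/μ. Then for every e ∈ ℝⁿ, ‖e − η R M⁻¹ H e‖_M ≤ ((κ − 1)/(κ + 1)) ‖e‖_M. -/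
/-!
In the `M`-orthonormal eigenbasis `uⱼ`, `M⁻¹H uⱼ = λⱼ uⱼ`, and `R` negates exactly the directions
with `λⱼ < 0`, so `R M⁻¹H uⱼ = |λⱼ| uⱼ`. Hence `I − η R M⁻¹H` is diagonal in this basis with
entries `1 − η|λⱼ| ∈ [−(L−μ)/(L+μ), (L−μ)/(L+μ)]`, and by Parseval for the `M`-inner product it
contracts the `M`-norm by `(L−μ)/(L+μ) = (κ−1)/(κ+1)`.
-/

open Matrix

noncomputable def mNorm {n : ℕ} (M : Matrix (Fin n) (Fin n) ℝ) (v : Fin n → ℝ) : ℝ :=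
  Real.sqrt (v ⬝ᵥ (M *ᵥ v))

def IsMOrthonormal {ι κ : Type*} [Fintype ι] [DecidableEq κ] (M : Matrix ι ι ℝ) (u : κ → ι → ℝ) :
    Prop :=
  ∀ i j, u i ⬝ᵥ (M *ᵥ u j) = if i = j then 1 else 0

def mReflection {ι κ : Type*} [Fintype ι] [DecidableEq ι] (M : Matrix ι ι ℝ) (u : κ → ι → ℝ)
    (s : Finset κ) : Matrix ι ι ℝ :=
  1 - (2 : ℝ) • ∑ j ∈ s, vecMulVec (u j) (u j) * M

namespace IsMOrthonormal

section Family

variable {ι κ : Type*} [Fintype ι] [DecidableEq κ] {M : Matrix ι ι ℝ} {u : κ → ι → ℝ}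

theorem dotProduct_mulVec_sum_smul [Fintype κ] (hu : IsMOrthonormal M u) (a : κ → ℝ) :
    (∑ j, a j • u j) ⬝ᵥ (M *ᵥ ∑ j, a j • u j) = ∑ j, a j ^ 2 := by
  simp [mulVec_sum, mulVec_smul, dotProduct_sum, sum_dotProduct, hu _ _, sq]

theorem mReflection_mulVec [DecidableEq ι] (hu : IsMOrthonormal M u) (s : Finset κ) (j : κ) :
    mReflection M u s *ᵥ u j = (if j ∈ s then -1 else 1 : ℝ) • u j := by
  have hproj : (∑ i ∈ s, vecMulVec (u i) (u i) * M) *ᵥ u j = if j ∈ s then u j else 0 := by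
    simp [sum_mulVec, ← mulVec_mulVec, vecMulVec_mulVec, hu _ _]
  rw [mReflection, sub_mulVec, one_mulVec, smul_mulVec, hproj]
  split_ifs <;> module

theorem mReflection_mulVec_smul_eq_abs [DecidableEq ι] (hu : IsMOrthonormal M u) {s : Finset κ}
    {j : κ} {x : ℝ} (hx : x < 0 ↔ j ∈ s) : mReflection M u s *ᵥ (x • u j) = |x| • u j := by
  rw [mulVec_smul, hu.mReflection_mulVec, smul_smul]
  by_cases hxs : x < 0
  · simp [hx.mp hxs, abs_of_neg hxs]
  · simp [mt hx.mpr hxs, abs_of_nonneg (not_lt.mp hxs)]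

end Family

section Basis

variable {ι : Type*} [Fintype ι] [DecidableEq ι] {M : Matrix ι ι ℝ} {u : ι → ι → ℝ}

theorem sum_smul_eq (hu : IsMOrthonormal M u) (e : ι → ℝ) :
    ∑ j, (u j ⬝ᵥ (M *ᵥ e)) • u j = e := by
  set W := Matrix.of u
  have hW : W * (M * Wᵀ) = 1 := by
    ext i j
    exact hu i j
  -- a one-sided inverse of a square matrix is two-sided
  have hW' : Wᵀ * (W * M) = 1 := mul_eq_one_comm.mp (by rwa [← Matrix.mul_assoc] at hW)
  calc ∑ j, (u j ⬝ᵥ (M *ᵥ e)) • u j = Wᵀ *ᵥ ((W * M) *ᵥ e) := by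
        rw [mulVec_transpose, vecMul_eq_sum, ← mulVec_mulVec]; rfl
    _ = e := by rw [mulVec_mulVec, hW', one_mulVec]

theorem mulVec_dotProduct_mulVec_le (hu : IsMOrthonormal M u) {A : Matrix ι ι ℝ} {d : ι → ℝ}
    (hA : ∀ j, A *ᵥ u j = d j • u j) {r : ℝ} (hd : ∀ j, |d j| ≤ r) (e : ι → ℝ) :
    (A *ᵥ e) ⬝ᵥ (M *ᵥ (A *ᵥ e)) ≤ r ^ 2 * (e ⬝ᵥ (M *ᵥ e)) := by
  set c := fun j => u j ⬝ᵥ (M *ᵥ e)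
  have hAe : A *ᵥ e = ∑ j, (c j * d j) • u j := by
    conv_lhs => rw [← hu.sum_smul_eq e]
    simp [mulVec_sum, mulVec_smul, hA, smul_smul, c]
  have he : e = ∑ j, c j • u j := (hu.sum_smul_eq e).symm
  rw [hAe, hu.dotProduct_mulVec_sum_smul]
  conv_rhs => rw [he, hu.dotProduct_mulVec_sum_smul, Finset.mul_sum]
  refine Finset.sum_le_sum fun j _ => ?_
  rw [mul_pow, mul_comm (r ^ 2)]
  exact mul_le_mul_of_nonneg_left (sq_le_sq.mpr ((hd j).trans (le_abs_self r))) (sq_nonneg _)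

end Basis

theorem mNorm_mulVec_le {n : ℕ} {M : Matrix (Fin n) (Fin n) ℝ} {u : Fin n → Fin n → ℝ}
    (hu : IsMOrthonormal M u) {A : Matrix (Fin n) (Fin n) ℝ} {d : Fin n → ℝ}
    (hA : ∀ j, A *ᵥ u j = d j • u j) {r : ℝ} (hr : 0 ≤ r) (hd : ∀ j, |d j| ≤ r) (e : Fin n → ℝ) :
    mNorm M (A *ᵥ e) ≤ r * mNorm M e :=
  calc mNorm M (A *ᵥ e) ≤ √(r ^ 2 * (e ⬝ᵥ (M *ᵥ e))) :=
        Real.sqrt_le_sqrt (hu.mulVec_dotProduct_mulVec_le hA hd e)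
    _ = r * mNorm M e := by rw [Real.sqrt_mul (sq_nonneg r), Real.sqrt_sq hr, mNorm]

end IsMOrthonormal

theorem abs_one_sub_two_div_add_mul_le {μ L x : ℝ} (hμ : 0 < μ) (hμx : μ ≤ x) (hxL : x ≤ L) :
    |1 - 2 / (L + μ) * x| ≤ (L - μ) / (L + μ) := by
  have hLμ : 0 < L + μ := by linarith
  rw [show 1 - 2 / (L + μ) * x = (L + μ - 2 * x) / (L + μ) by field_simp, abs_div,
    abs_of_pos hLμ, div_le_div_iff_of_pos_right hLμ, abs_le]
  constructor <;> linarith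

theorem div_sub_one_div_div_add_one {μ L : ℝ} (hμ : μ ≠ 0) :
    (L / μ - 1) / (L / μ + 1) = (L - μ) / (L + μ) := by
  rw [div_sub_one hμ, div_add_one hμ, div_div_div_cancel_right₀ hμ]

theorem contraction_bound_general
    (n k : ℕ) (M H : Matrix (Fin n) (Fin n) ℝ)
    (hM : M.PosDef)
    (u : Fin n → (Fin n → ℝ)) (lam : Fin n → ℝ)
    (hortho : ∀ i j, u i ⬝ᵥ (M *ᵥ u j) = if i = j then (1 : ℝ) else 0)
    (heig : ∀ j, H *ᵥ u j = lam j • (M *ᵥ u j))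
    (μ L : ℝ) (hμ : 0 < μ) (hμL : μ ≤ L)
    (hbound : ∀ j, μ ≤ |lam j| ∧ |lam j| ≤ L)
    (hneg : ∀ j : Fin n, lam j < 0 ↔ (j : ℕ) < k)
    (η κ : ℝ) (hη : η = 2 / (L + μ)) (hκ : κ = L / μ) :
    ∀ e : Fin n → ℝ,
      mNorm M (e - η • ((1 - (2 : ℝ) • ∑ j ∈ Finset.univ.filter (fun j : Fin n => (j : ℕ) < k),
          vecMulVec (u j) (u j) * M) *ᵥ (M⁻¹ *ᵥ (H *ᵥ e))))
        ≤ ((κ - 1) / (κ + 1)) * mNorm M e := by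
  intro e
  have hu : IsMOrthonormal M u := hortho
  set R := mReflection M u (Finset.univ.filter fun j : Fin n => (j : ℕ) < k)
  have hM_inv : M⁻¹ * M = 1 := nonsing_inv_mul M hM.det_pos.ne'.isUnit
  have hRu : ∀ j, (R * (M⁻¹ * H)) *ᵥ u j = |lam j| • u j := fun j => by
    rw [← mulVec_mulVec, ← mulVec_mulVec, heig, mulVec_smul, mulVec_mulVec, hM_inv, one_mulVec]
    exact hu.mReflection_mulVec_smul_eq_abs (by simpa using hneg j)
  have hstep : e - η • (R *ᵥ (M⁻¹ *ᵥ (H *ᵥ e))) = (1 - η • (R * (M⁻¹ * H))) *ᵥ e := by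
    rw [sub_mulVec, one_mulVec, smul_mulVec, mulVec_mulVec, mulVec_mulVec, Matrix.mul_assoc]
  rw [show (1 - (2 : ℝ) • _) = R from rfl, hstep, hκ, div_sub_one_div_div_add_one hμ.ne']
  refine hu.mNorm_mulVec_le (d := fun j => 1 - η * |lam j|) (fun j => ?_)
    (div_nonneg (by linarith) (by linarith)) (fun j => ?_) e
  · rw [sub_mulVec, one_mulVec, smul_mulVec, hRu, smul_smul, sub_smul, one_smul]
  · rw [hη]
    exact abs_one_sub_two_div_add_mul_le hμ (hbound j).1 (hbound j).2

/-- Let `M` be SPD, `H` symmetric, `u₁, …, uₙ` an `M`-orthonormal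
basis with `H uⱼ = λⱼ M uⱼ`, `μ ≤ |λⱼ| ≤ L` and exactly the first `k`
eigenvalues negative. With `R = I − 2∑_{j≤k} uⱼuⱼᵀM`, `η = 2/(L+μ)`,
`κ = L/μ`, for every `e ∈ ℝⁿ`:
`‖e − η R M⁻¹ H e‖_M ≤ ((κ−1)/(κ+1)) ‖e‖_M`. -/
theorem contraction_bound
    (n k : ℕ) (hk : k ≤ n) (M H : Matrix (Fin n) (Fin n) ℝ)
    (hM : M.PosDef) (hH : H.IsSymm)
    (u : Fin n → (Fin n → ℝ)) (lam : Fin n → ℝ)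
    (hortho : ∀ i j, u i ⬝ᵥ (M *ᵥ u j) = if i = j then (1 : ℝ) else 0)
    (heig : ∀ j, H *ᵥ u j = lam j • (M *ᵥ u j))
    (μ L : ℝ) (hμ : 0 < μ) (hμL : μ ≤ L)
    (hbound : ∀ j, μ ≤ |lam j| ∧ |lam j| ≤ L)
    (hneg : ∀ j : Fin n, lam j < 0 ↔ (j : ℕ) < k)
    (η κ : ℝ) (hη : η = 2 / (L + μ)) (hκ : κ = L / μ) :
    ∀ e : Fin n → ℝ,
      mNorm M (e - η • ((1 - (2 : ℝ) • ∑ j ∈ Finset.univ.filter (fun j : Fin n => (j : ℕ) < k),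
          vecMulVec (u j) (u j) * M) *ᵥ (M⁻¹ *ᵥ (H *ᵥ e))))
        ≤ ((κ - 1) / (κ + 1)) * mNorm M e :=
  contraction_bound_general n k M H hM u lam hortho heig μ L hμ hμL hbound hneg η κ hη hκ
end

section
/- Let H ∈ ℝ^{n×n} be symmetric with eigendecomposition H = QΛQᵀ, where Q is orthogonal and Λ = diag(λ₁, …, λₙ), and suppose 0 < μ ≤ |λᵢ| ≤ L for all i. For ε > 0, define the spectral preconditioner M = Q diag(|λ₁| + ε, …, |λₙ| + ε) Qᵀ. Then: (i) M is symmetric positive definite; (ii) the generalized eigenvalues of (H, M) are exactly σᵢ = λᵢ/(|λᵢ| + ε) with the same eigenvectors, and each σᵢ ∈ (−1, 1); (iii) the preconditioned condition number satisfies κ_M := max_i |σᵢ| / min_i |σᵢ| ≤ (1 + ε/μ)/(1 + ε/L). -/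
open Matrix

/-! Conjugation by the orthogonal `Q` reduces everything to diagonal matrices: `M` is positive
definite because its eigenvalues `|λᵢ| + ε` are positive, `H - t • M = Q diag(λᵢ - t (|λᵢ| + ε)) Qᵀ`
has determinant `∏ (λᵢ - t (|λᵢ| + ε))`, and `|σᵢ| = s / (s + ε)` with `s = |λᵢ| ∈ [μ, L]` is
increasing in `s`, so `κ_M ≤ (L / (L + ε)) / (μ / (μ + ε))`. -/

namespace Matrix

variable {ι R : Type*} [Fintype ι] [DecidableEq ι] [CommRing R] {Q : Matrix ι ι R}

theorem isUnit_of_transpose_mul_self (hQ : Qᵀ * Q = 1) : IsUnit Q :=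
  IsUnit.of_mul_eq_one_right Qᵀ hQ

theorem transpose_mulVec_col_of_transpose_mul_self (hQ : Qᵀ * Q = 1) (i : ι) :
    Qᵀ *ᵥ Q.col i = Pi.single i 1 := by
  rw [← mulVec_single_one, mulVec_mulVec, hQ, one_mulVec]

theorem mul_diagonal_mul_transpose_mulVec_col (hQ : Qᵀ * Q = 1) (d : ι → R) (i : ι) :
    (Q * diagonal d * Qᵀ) *ᵥ Q.col i = d i • Q.col i := by
  rw [← mulVec_mulVec, ← mulVec_mulVec, transpose_mulVec_col_of_transpose_mul_self hQ,
    diagonal_mulVec_single, mul_one, mulVec_single]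
  ext r
  exact mul_comm _ _

theorem det_conj_of_transpose_mul_self (hQ : Qᵀ * Q = 1) (N : Matrix ι ι R) :
    (Q * N * Qᵀ).det = N.det := by
  rw [← inv_eq_left_inv hQ, det_conj (isUnit_of_transpose_mul_self hQ)]

theorem mul_diagonal_mul_sub_smul (P P' : Matrix ι ι R) (a b : ι → R) (t : R) :
    P * diagonal a * P' - t • (P * diagonal b * P') = P * diagonal (a - t • b) * P' := by
  rw [← smul_mul, ← Matrix.mul_smul, ← sub_mul, ← mul_sub, ← diagonal_smul, diagonal_sub]
  rfl

end Matrix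

theorem Matrix.posDef_mul_diagonal_mul_transpose {ι : Type*} [Fintype ι] [DecidableEq ι]
    {Q : Matrix ι ι ℝ} (hQ : Qᵀ * Q = 1) {d : ι → ℝ} (hd : ∀ i, 0 < d i) :
    (Q * diagonal d * Qᵀ).PosDef := by
  simpa only [conjTranspose_eq_transpose_of_trivial] using
    (PosDef.diagonal hd).mul_mul_conjTranspose_same
      (vecMul_injective_of_isUnit (isUnit_of_transpose_mul_self hQ))

theorem Finset.sup'_div_inf'_le {ι K : Type*} [Field K] [LinearOrder K] [IsStrictOrderedRing K]
    {s : Finset ι} (hs : s.Nonempty) {f : ι → K} {a b : K} (ha : 0 < a)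
    (hfa : ∀ i ∈ s, a ≤ f i) (hfb : ∀ i ∈ s, f i ≤ b) :
    s.sup' hs f / s.inf' hs f ≤ b / a := by
  obtain ⟨j, hj⟩ := hs
  exact div_le_div₀ (ha.le.trans ((hfa j hj).trans (hfb j hj))) (sup'_le _ _ hfb) ha
    (le_inf' _ _ hfa)

section ShiftedRatio

variable {K : Type*} [Field K] [LinearOrder K] [IsStrictOrderedRing K] {ε : K}

theorem div_add_le_div_add {s t : K} (hs : 0 ≤ s) (hε : 0 < ε) (hst : s ≤ t) :
    s / (s + ε) ≤ t / (t + ε) := by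
  rw [div_le_div_iff₀ (by positivity) (by linarith)]
  nlinarith

theorem abs_div_abs_add (hε : 0 < ε) (x : K) : |x / (|x| + ε)| = |x| / (|x| + ε) := by
  rw [abs_div, abs_of_pos (by positivity : 0 < |x| + ε)]

theorem div_abs_add_mem_Ioo (hε : 0 < ε) (x : K) : x / (|x| + ε) ∈ Set.Ioo (-1) 1 := by
  rw [Set.mem_Ioo, ← abs_lt, abs_div_abs_add hε, div_lt_one (by positivity)]
  linarith

end ShiftedRatio

/-- Let `H = QΛQᵀ` be symmetric with `Q` orthogonal,
`Λ = diag(λ₁, …, λₙ)` and `0 < μ ≤ |λᵢ| ≤ L`. For `ε > 0`, the spectral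
preconditioner `M = Q diag(|λ₁| + ε, …, |λₙ| + ε) Qᵀ` satisfies:
(i) `M` is SPD; (ii) the generalized eigenvalues of `(H, M)` are exactly
`σᵢ = λᵢ/(|λᵢ| + ε)` with the same eigenvectors (the columns of `Q`), and each
`σᵢ ∈ (−1, 1)`; (iii) `κ_M = max |σᵢ| / min |σᵢ| ≤ (1 + ε/μ)/(1 + ε/L)`. -/
theorem spectral_preconditioner
    (n : ℕ) (hn : 0 < n)
    (H Q M : Matrix (Fin n) (Fin n) ℝ) (lam : Fin n → ℝ)
    (hQ : Qᵀ * Q = 1)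
    (hHdef : H = Q * Matrix.diagonal lam * Qᵀ)
    (μ L : ℝ) (hμ : 0 < μ) (hμL : μ ≤ L)
    (hbound : ∀ i, μ ≤ |lam i| ∧ |lam i| ≤ L)
    (ε : ℝ) (hε : 0 < ε)
    (hMdef : M = Q * Matrix.diagonal (fun i => |lam i| + ε) * Qᵀ) :
    M.PosDef ∧
    (∀ i : Fin n,
        H *ᵥ (fun r => Q r i) = (lam i / (|lam i| + ε)) • (M *ᵥ (fun r => Q r i)) ∧
        lam i / (|lam i| + ε) ∈ Set.Ioo (-1 : ℝ) 1) ∧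
    (∀ t : ℝ, (H - t • M).det = 0 ↔ ∃ i : Fin n, t = lam i / (|lam i| + ε)) ∧
    (Finset.univ.sup' (Finset.univ_nonempty_iff.mpr ⟨⟨0, hn⟩⟩)
          (fun i => |lam i / (|lam i| + ε)|)
        / Finset.univ.inf' (Finset.univ_nonempty_iff.mpr ⟨⟨0, hn⟩⟩)
          (fun i => |lam i / (|lam i| + ε)|)
      ≤ (1 + ε / μ) / (1 + ε / L)) := by
  have hc : ∀ i, 0 < |lam i| + ε := fun i => by positivity
  refine ⟨hMdef ▸ posDef_mul_diagonal_mul_transpose hQ hc, fun i => ⟨?_, div_abs_add_mem_Ioo hε _⟩,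
    fun t => ?_, ?_⟩
  · change H *ᵥ Q.col i = _ • (M *ᵥ Q.col i)
    rw [hHdef, hMdef, mul_diagonal_mul_transpose_mulVec_col hQ, mul_diagonal_mul_transpose_mulVec_col hQ, smul_smul,
      div_mul_cancel₀ _ (hc i).ne']
  · rw [hHdef, hMdef, mul_diagonal_mul_sub_smul, det_conj_of_transpose_mul_self hQ, det_diagonal,
      Finset.prod_eq_zero_iff]
    simp only [Finset.mem_univ, true_and, Pi.sub_apply, Pi.smul_apply, smul_eq_mul,
      sub_eq_zero, eq_div_iff (hc _).ne', eq_comm]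
  · have hL : 0 < L := hμ.trans_le hμL
    calc _ ≤ (L / (L + ε)) / (μ / (μ + ε)) := by
          refine Finset.sup'_div_inf'_le _ (by positivity) (fun i _ => ?_) (fun i _ => ?_) <;>
            rw [abs_div_abs_add hε]
          · exact div_add_le_div_add hμ.le hε (hbound i).1
          · exact div_add_le_div_add (abs_nonneg _) hε (hbound i).2
      _ = (1 + ε / μ) / (1 + ε / L) := by field_simp
end
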